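/- For every integer r ≥ 2, ∑_{ℓ=2}^{r} (−1)^ℓ ℓ² / ((r+ℓ)! (r−ℓ)!) = 1 / ((r−1)! (r+1)!). -/

import Mathlib

/-!
Put `t ℓ = (-1)^ℓ ℓ² / ((r+ℓ)! (r-ℓ)!)`. Up to the factor `(2r)!` this is
`(-1)^ℓ ℓ² C(2r, r+ℓ)`, and the sum of `t ℓ` over `0 ≤ ℓ ≤ r` vanishes: Gosper's algorithm finds
the hypergeometric antidifference `F ℓ = (-1)^(ℓ+1) ℓ(ℓ-1) / (2(r-1) (r+ℓ-1)! (r-ℓ)!)`, with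
`t ℓ = F (ℓ+1) - F ℓ`, and `F 0 = F (r+1) = 0`. Hence the sum over `2 ≤ ℓ ≤ r` is
`-t 1 = 1/((r-1)! (r+1)!)`.
-/

open Finset

namespace PaperStmt

def summand (r ℓ : ℕ) : ℚ :=
  (-1) ^ ℓ * (ℓ : ℚ) ^ 2 / ((r + ℓ).factorial * (r - ℓ).factorial)

/-- `1/(r-ℓ)!` is written as `(r+1-ℓ)/(r+1-ℓ)!`, so that it vanishes at `ℓ = r+1`
instead of taking the junk value `1/0!`. -/
def antidiff (r ℓ : ℕ) : ℚ :=
  (-1) ^ (ℓ + 1) * ℓ * (ℓ - 1) * ((r : ℚ) + 1 - ℓ) /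
    (2 * ((r : ℚ) - 1) * (r + ℓ - 1).factorial * (r + 1 - ℓ).factorial)

theorem summand_eq_antidiff_sub {r ℓ : ℕ} (hr : 2 ≤ r) (hℓ : ℓ ≤ r) :
    summand r ℓ = antidiff r (ℓ + 1) - antidiff r ℓ := by
  have hup : (r + ℓ).factorial = (r + ℓ) * (r + ℓ - 1).factorial :=
    (Nat.mul_factorial_pred (by omega)).symm
  have hdown : (r + 1 - ℓ).factorial = (r + 1 - ℓ) * (r - ℓ).factorial := by
    rw [show r + 1 - ℓ = r - ℓ + 1 by omega, Nat.factorial_succ]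
  have hr1 : (r : ℚ) - 1 ≠ 0 := by
    have : (2 : ℚ) ≤ r := by exact_mod_cast hr
    linarith
  have hrℓ : (r : ℚ) + 1 - ℓ ≠ 0 := by
    have : (ℓ : ℚ) ≤ r := by exact_mod_cast hℓ
    linarith
  simp only [summand, antidiff, show r + (ℓ + 1) - 1 = r + ℓ by omega,
    show r + 1 - (ℓ + 1) = r - ℓ by omega, hup, hdown]
  push_cast [Nat.cast_sub (show ℓ ≤ r + 1 by omega)]
  field_simp
  ring

theorem sum_range_summand {r : ℕ} (hr : 2 ≤ r) : ∑ ℓ ∈ range (r + 1), summand r ℓ = 0 := by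
  rw [sum_congr rfl fun ℓ hℓ ↦ summand_eq_antidiff_sub hr (mem_range_succ_iff.mp hℓ),
    sum_range_sub]
  simp [antidiff]

theorem summand_one (r : ℕ) : summand r 1 = -1 / ((r - 1).factorial * (r + 1).factorial) := by
  rw [summand]
  norm_num [mul_comm]

/-- For `r ≥ 2`, `∑_{ℓ=2}^{r} (-1)^ℓ ℓ² / ((r+ℓ)!(r-ℓ)!) = 1/((r-1)!(r+1)!)`. -/
theorem stmt8 (r : ℕ) (hr : 2 ≤ r) :
    ∑ ℓ ∈ Finset.Icc 2 r,
        (-1 : ℚ) ^ ℓ * (ℓ : ℚ) ^ 2 / ((Nat.factorial (r + ℓ) : ℚ) * (Nat.factorial (r - ℓ) : ℚ))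
      = 1 / ((Nat.factorial (r - 1) : ℚ) * (Nat.factorial (r + 1) : ℚ)) := by
  have hsplit := sum_Ico_consecutive (summand r) (Nat.zero_le 2) (show 2 ≤ r + 1 by omega)
  rw [← range_eq_Ico, ← range_eq_Ico, sum_range_summand hr, Ico_add_one_right_eq_Icc] at hsplit
  simp only [sum_range_succ, sum_range_zero, summand_one,
    show summand r 0 = 0 by simp [summand]] at hsplit
  change ∑ ℓ ∈ Icc 2 r, summand r ℓ = _
  linear_combination hsplit
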